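/- For every n < ω, if ξ ∈ X and ξ < Θ_X(Ω_n), then there exists ζ < Ω_n such that ξ = Θ_X(ζ). -/

import Mathlib

open Ordinal Set

noncomputable section
open scoped Classical

/-- `Ω`, the first uncountable ordinal. -/
def OmegaO : Ordinal := (Cardinal.aleph 1).ord

/-- `ε_{Ω+1}`, the least `ε > Ω` with `ω ^ ε = ε`. -/
def epsOmega : Ordinal := nfp (fun a => Ordinal.omega0 ^ a) (OmegaO + 1)

lemma omega0_le_OmegaO : Ordinal.omega0 ≤ OmegaO := by
  rw [OmegaO, ← Cardinal.ord_aleph0]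
  exact Cardinal.ord_le_ord.2 (Cardinal.aleph0_le_aleph 1)

lemma one_lt_OmegaO : 1 < OmegaO :=
  lt_of_lt_of_le Ordinal.one_lt_omega0 omega0_le_OmegaO

lemma OmegaO_pos : 0 < OmegaO := lt_trans zero_lt_one one_lt_OmegaO

/-- `ξ*`, the maximal coefficient in the `Ω`-normal form of `ξ`. -/
def star (ξ : Ordinal) : Ordinal :=
  if h0 : ξ = 0 then 0
  else if hl : log OmegaO ξ < ξ then
    max (max (star (log OmegaO ξ)) (star (ξ % OmegaO ^ log OmegaO ξ)))
      (ξ / OmegaO ^ log OmegaO ξ)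
  else 0
termination_by ξ
decreasing_by
  · exact hl
  · exact mod_opow_log_lt_self _ h0

/-- The generalized fundamental sequence `ξ[θ]`. -/
def fs (ξ θ : Ordinal) : Ordinal :=
  if h0 : ξ ≤ 1 then 0
  else if hmod : ξ % OmegaO ^ log OmegaO ξ ≠ 0 then
    OmegaO ^ log OmegaO ξ * (ξ / OmegaO ^ log OmegaO ξ) + fs (ξ % OmegaO ^ log OmegaO ξ) θ
  else if Order.IsSuccLimit (ξ / OmegaO ^ log OmegaO ξ) then OmegaO ^ log OmegaO ξ * θ
  else if hβ : ξ / OmegaO ^ log OmegaO ξ = 1 then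
    (if hlog : Order.IsSuccLimit (log OmegaO ξ) then
       (if hll : log OmegaO ξ < ξ then OmegaO ^ fs (log OmegaO ξ) θ else 0)
     else OmegaO ^ Ordinal.pred (log OmegaO ξ) * θ)
  else
    OmegaO ^ log OmegaO ξ * Ordinal.pred (ξ / OmegaO ^ log OmegaO ξ) + fs (OmegaO ^ log OmegaO ξ) θ
termination_by ξ
decreasing_by
  · exact mod_opow_log_lt_self _ (by intro h; exact h0 (by simp [h]))
  · exact hll
  · -- `Ω ^ log Ω ξ < ξ`
    have hξ0 : ξ ≠ 0 := by intro h; exact h0 (by simp [h])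
    have hle : OmegaO ^ log OmegaO ξ ≤ ξ := opow_log_le_self _ hξ0
    have hpos : 0 < OmegaO ^ log OmegaO ξ :=
      opow_pos _ OmegaO_pos
    have hβ0 : 0 < ξ / OmegaO ^ log OmegaO ξ :=
      Ordinal.div_pos (by positivity) |>.2 hle
    have hβ1 : 1 < ξ / OmegaO ^ log OmegaO ξ :=
      lt_of_le_of_ne (Order.one_le_iff_ne_zero.2 hβ0.ne') (Ne.symm hβ)
    calc OmegaO ^ log OmegaO ξ = OmegaO ^ log OmegaO ξ * 1 := (mul_one _).symm
      _ < OmegaO ^ log OmegaO ξ * (ξ / OmegaO ^ log OmegaO ξ) := by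
          exact mul_lt_mul_of_pos_left hβ1 hpos
      _ ≤ ξ := Ordinal.mul_div_le _ _

/-- The terminal part `τ(ξ)`. -/
def tau (ξ : Ordinal) : Ordinal :=
  if h0 : ξ = 0 then 0
  else if hmod : ξ % OmegaO ^ log OmegaO ξ ≠ 0 then tau (ξ % OmegaO ^ log OmegaO ξ)
  else if Order.IsSuccLimit (ξ / OmegaO ^ log OmegaO ξ) then ξ / OmegaO ^ log OmegaO ξ
  else if log OmegaO ξ = 0 then 1
  else if hlog : Order.IsSuccLimit (log OmegaO ξ) then
    (if hll : log OmegaO ξ < ξ then tau (log OmegaO ξ) else 0)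
  else OmegaO
termination_by ξ
decreasing_by
  · exact mod_opow_log_lt_self _ h0
  · exact hll

/-- The collapsing function `Θ_X`. -/
def ThetaF (X : Set Ordinal) (ξ : Ordinal) : Ordinal :=
  sInf {θ | θ ∈ X ∧ star ξ < θ ∧ ∀ ζ, ζ < ξ → star ζ < θ → ThetaF X ζ < θ}
termination_by ξ
decreasing_by exact by assumption

/-- `Ω_n`: the tower `Ω_0 = 1`, `Ω_{n+1} = Ω ^ Ω_n`. -/
def OmegaTow : ℕ → Ordinal
  | 0 => 1
  | n + 1 => OmegaO ^ OmegaTow n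

/-- `Θ_X(ε_{Ω+1}) = sup_n Θ_X(Ω_n)`. -/
def ThetaEps (X : Set Ordinal) : Ordinal := ⨆ n : ℕ, ThetaF X (OmegaTow n)

/-- `ε̂_{Ω+1}`. -/
def hatEps (X : Set Ordinal) : Set Ordinal :=
  {ξ | ξ < epsOmega ∧ star ξ < ThetaEps X}

/-- `X` is a club in `Ω`. -/
def IsClubBelowOmega (X : Set Ordinal) : Prop :=
  (∀ x ∈ X, x < OmegaO) ∧
  (∀ a, a < OmegaO → ∃ x ∈ X, a < x) ∧
  (∀ S : Set Ordinal, S ⊆ X → S.Nonempty → sSup S < OmegaO → sSup S ∈ X)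

/-- The set of limit points of `X` (below `Ω`). -/
def limitPtsOf (X : Set Ordinal) : Set Ordinal :=
  {x | 0 < x ∧ ∀ y, y < x → ∃ z ∈ X, y < z ∧ z < x}

/-- `FIX(X)`. -/
def FIXs (X : Set Ordinal) : Set Ordinal :=
  {ξ | ξ < epsOmega ∧ star (fs ξ 1) < star ξ ∧ star ξ = tau ξ ∧
    ∃ γ, ξ < γ ∧ γ < epsOmega ∧ star ξ = ThetaF X γ}

/-- `JUMP(X)`. -/
def JUMPs (X : Set Ordinal) : Set Ordinal :=
  {0} ∪ {ξ | ∃ ζ, ξ = ζ + 1} ∪ FIXs X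

/-- `Θ*`. -/
def ThetaStarF (X : Set Ordinal) (ξ : Ordinal) : Ordinal :=
  if ∃ ζ, ξ = ζ + 1 then ThetaF X (Ordinal.pred ξ)
  else if ξ ∈ FIXs X then tau ξ
  else 0

/-- `ξ̌`. -/
def checkF (X : Set Ordinal) (ξ : Ordinal) : Ordinal :=
  if 0 < ThetaStarF X ξ then OmegaO * (ξ / OmegaO) else ξ

/-- `ℙ`, the club of countable additively indecomposable ordinals. -/
def PP : Set Ordinal := {x | x < OmegaO ∧ ∃ a, x = Ordinal.omega0 ^ a}

/-- `1 + Ord`, the club of nonzero countable ordinals. -/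
def oneOrdS : Set Ordinal := {x | 0 < x ∧ x < OmegaO}

/-- `Θ^{(i)}(ξ)`. -/
def ThetaIter (X : Set Ordinal) (ξ : Ordinal) : ℕ → Ordinal
  | 0 => ThetaStarF X ξ
  | n + 1 => ThetaF X (fs (checkF X ξ) (ThetaIter X ξ n))

/-- A Buchholz system of fundamental sequences for `Θ_X`. -/
def IsBuchholz (X : Set Ordinal) (B : Ordinal → ℕ → Ordinal) : Prop :=
  (∀ n, B 0 n = 0) ∧
  (∀ α ξ n, ξ ∈ hatEps X → OmegaO ≤ ξ → tau ξ < OmegaO → ξ = fs α (tau ξ) →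
    B ξ n = fs α (B (tau ξ) n)) ∧
  (∀ ξ n, ξ ∈ hatEps X → 0 < tau (checkF X ξ) → tau (checkF X ξ) < OmegaO →
    B (ThetaF X ξ) n = ThetaF X (B (checkF X ξ) n + ThetaStarF X ξ)) ∧
  (∀ ξ n, ξ ∈ hatEps X → tau (checkF X ξ) = OmegaO →
    B (ThetaF X ξ) n = ThetaIter X ξ n)

/-- The additional clause for the `σ = Θ_{1+Ord}` Buchholz system. -/
def SigmaExtra (B : Ordinal → ℕ → Ordinal) : Prop :=
  ∀ β n, β < OmegaO → B (ThetaF oneOrdS β) n = β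

/-- The additional clauses for the `ϑ = Θ_ℙ` Buchholz system. -/
def VarthetaExtra (B : Ordinal → ℕ → Ordinal) : Prop :=
  (∀ α β n, 0 < β → (∀ α' < α, α' + β < α + β) → B (α + β) n = α + B β n) ∧
  (∀ β n, β < OmegaO → β ∈ JUMPs PP → B (ThetaF PP β) n = ThetaStarF PP β * n)

/-! If `ξ ∈ X` and `η* < ξ ≤ Θ_X(η)`, the least such `η` collapses exactly to `ξ`: every
`ζ` below it with `ζ* < ξ` has `Θ_X(ζ) < ξ`, so `ξ` itself is a candidate in the infimum
defining `Θ_X(η)`. For `ξ < Θ_X(Ω_n)` one starts from `η = Ω_n`, whose only coefficient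
is `1` (or from `η = 0` when `ξ = 1`). -/

lemma star_ordinal_zero : _root_.star 0 = 0 := by
  rw [_root_.star]; simp

lemma star_opow_of_lt {a : Ordinal} (ha : a < OmegaO ^ a) :
    _root_.star (OmegaO ^ a) = max (_root_.star a) 1 := by
  have h0 : OmegaO ^ a ≠ 0 := (opow_pos a OmegaO_pos).ne'
  rw [_root_.star, dif_neg h0, log_opow one_lt_OmegaO, dif_pos ha, Ordinal.mod_self,
    Ordinal.div_self h0, star_ordinal_zero]
  simp

lemma OmegaTow_lt_opow (n : ℕ) : OmegaTow n < OmegaO ^ OmegaTow n := by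
  induction n with
  | zero => simpa [OmegaTow] using one_lt_OmegaO
  | succ n ih => exact (opow_lt_opow_iff_right one_lt_OmegaO).2 ih

lemma star_OmegaTow (n : ℕ) : _root_.star (OmegaTow n) = 1 := by
  induction n with
  | zero =>
    conv_lhs => rw [OmegaTow, ← opow_zero OmegaO]
    rw [star_opow_of_lt (by simp), star_ordinal_zero, max_eq_right zero_le_one]
  | succ n ih =>
    rw [OmegaTow, star_opow_of_lt (OmegaTow_lt_opow n), ih, max_self]

lemma ThetaF_le_of_mem {X : Set Ordinal} {ξ η : Ordinal} (hξ : ξ ∈ X)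
    (hη : _root_.star η < ξ)
    (hbelow : ∀ ζ < η, _root_.star ζ < ξ → ThetaF X ζ < ξ) : ThetaF X η ≤ ξ := by
  rw [ThetaF]
  exact csInf_le' ⟨hξ, hη, hbelow⟩

lemma star_lt_ThetaF {X : Set Ordinal} {ξ η : Ordinal} (hξ : ξ ∈ X)
    (hη : _root_.star η < ξ)
    (hbelow : ∀ ζ < η, _root_.star ζ < ξ → ThetaF X ζ < ξ) :
    _root_.star η < ThetaF X η := by
  have hmin := csInf_mem (⟨ξ, hξ, hη, hbelow⟩ :
    {θ | θ ∈ X ∧ _root_.star η < θ ∧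
      ∀ ζ < η, _root_.star ζ < θ → ThetaF X ζ < θ}.Nonempty)
  rw [ThetaF]
  exact hmin.2.1

lemma exists_le_eq_ThetaF {X : Set Ordinal} {ξ η : Ordinal} (hξ : ξ ∈ X)
    (hη : _root_.star η < ξ) (hξη : ξ ≤ ThetaF X η) : ∃ ζ ≤ η, ξ = ThetaF X ζ := by
  set S : Set Ordinal := {ζ | _root_.star ζ < ξ ∧ ξ ≤ ThetaF X ζ}
  have hmin : sInf S ∈ S := csInf_mem ⟨η, hη, hξη⟩
  refine ⟨sInf S, csInf_le' (show η ∈ S from ⟨hη, hξη⟩),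
    le_antisymm hmin.2 (ThetaF_le_of_mem hξ hmin.1 ?_)⟩
  intro ζ hζ hζstar
  by_contra! hξζ
  exact (csInf_le' (show ζ ∈ S from ⟨hζstar, hξζ⟩)).not_gt hζ

theorem stmt5_general (X : Set Ordinal) (h0X : 0 ∉ X)
    (n : ℕ) (ξ : Ordinal) (h1 : ξ ∈ X) (h2 : ξ < ThetaF X (OmegaTow n)) :
    ∃ ζ, ζ < OmegaTow n ∧ ξ = ThetaF X ζ := by
  have hξ : 1 ≤ ξ := Order.one_le_iff_ne_zero.2 fun h => h0X (h ▸ h1)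
  obtain ⟨η, hηn, hηstar, hξη⟩ :
      ∃ η ≤ OmegaTow n, _root_.star η < ξ ∧ ξ ≤ ThetaF X η := by
    rcases hξ.lt_or_eq with hξ1 | rfl
    · exact ⟨OmegaTow n, le_rfl, by rwa [star_OmegaTow], h2.le⟩
    · have hstar : _root_.star 0 < 1 := by rw [star_ordinal_zero]; exact zero_lt_one
      have hpos := star_lt_ThetaF h1 hstar fun _ hζ => (not_lt_zero hζ).elim
      rw [star_ordinal_zero] at hpos
      exact ⟨0, zero_le, hstar, Order.one_le_iff_pos.2 hpos⟩
  obtain ⟨ζ, hζη, rfl⟩ := exists_le_eq_ThetaF h1 hηstar hξη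
  exact ⟨ζ, (hζη.trans hηn).lt_of_ne (by rintro rfl; exact h2.false), rfl⟩

/-- every element of `X` below `Θ_X(Ω_n)` is of the form `Θ_X(ζ)` with `ζ < Ω_n`. -/
theorem stmt5 (X : Set Ordinal) (hX : IsClubBelowOmega X) (h0X : 0 ∉ X)
    (n : ℕ) (ξ : Ordinal) (h1 : ξ ∈ X) (h2 : ξ < ThetaF X (OmegaTow n)) :
    ∃ ζ, ζ < OmegaTow n ∧ ξ = ThetaF X ζ :=
  stmt5_general X h0X n ξ h1 h2

end
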